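/- For the fiberwise operators N : Λ^1 V* ⊗ Λ^q V* → Λ^0 V* ⊗ Λ^{q+1} V* and N̄ : Λ^0 V* ⊗ Λ^{q+1} V* → Λ^1 V* ⊗ Λ^q V* on a finite-dimensional real vector space V, one has N ∘ N̄ ∘ N = (q+1) · N on Λ^1 V* ⊗ Λ^q V*. -/
import Mathlib


open Finset

/-- Coefficients of a `(p,q)`-covector on `ℝⁿ`: a family of real coefficients indexed by a pair
of (increasing) multi-indices, i.e. subsets `I, J ⊆ {1,...,n}`. -/
abbrev Cov (n : ℕ) := Finset (Fin n) → Finset (Fin n) → ℝ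

/-- `sgn i I = (-1)^(l-1)` when `i` is the `l`-th smallest element of `I`. -/
noncomputable def sgn {n : ℕ} (i : Fin n) (I : Finset (Fin n)) : ℝ :=
  (-1 : ℝ) ^ (I.filter (fun j => j < i)).card

/-- A covector family is of bidegree `(p,q)` if it is supported on indices with
`|I| = p`, `|J| = q`. -/
def IsBidegree {n : ℕ} (p q : ℕ) (ω : Cov n) : Prop :=
  ∀ I J : Finset (Fin n), (I.card ≠ p ∨ J.card ≠ q) → ω I J = 0

/-- The swap map `J : Λᵖ V* ⊗ Λ^q V* → Λ^q V* ⊗ Λᵖ V*`,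
`J(f d'x_I ⊗ d''x_J) = (-1)^{pq} f d'x_J ⊗ d''x_I`, in coefficients. -/
noncomputable def Jmap {n : ℕ} (p q : ℕ) (ω : Cov n) : Cov n :=
  fun I K => (-1 : ℝ) ^ (p * q) * ω K I

/-- The monodromy operator `N : Λᵖ V* ⊗ Λ^q V* → Λ^{p-1} V* ⊗ Λ^{q+1} V*`,
`N(f d'x_I ⊗ d''x_J) = ∑_{i ∈ I} (-1)^{p-1} sgn(i,I) f d'x_{I∖i} ⊗ (d''x_i ∧ d''x_J)`,
written in coefficients (the extra `sgn i J'` accounts for re-ordering `d''x_i ∧ d''x_J`). -/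
noncomputable def Nmap {n : ℕ} (p : ℕ) (ω : Cov n) : Cov n :=
  fun I' J' => ∑ i ∈ J', if i ∈ I' then 0 else
    (-1 : ℝ) ^ (p - 1) * sgn i (insert i I') * sgn i J' * ω (insert i I') (J'.erase i)

/-- The conjugate monodromy operator `N̄ : Λᵖ V* ⊗ Λ^q V* → Λ^{p+1} V* ⊗ Λ^{q-1} V*`,
`N̄(f d'x_I ⊗ d''x_J) = ∑_{j ∈ J} sgn(j,J) f (d'x_I ∧ d'x_j) ⊗ d''x_{J∖j}`, in
coefficients (the factor `(-1)^p * sgn j I'` accounts for re-ordering `d'x_I ∧ d'x_j`). -/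
noncomputable def Nbarmap {n : ℕ} (p : ℕ) (ω : Cov n) : Cov n :=
  fun I' J' => ∑ j ∈ I', if j ∈ J' then 0 else
    (-1 : ℝ) ^ p * sgn j I' * sgn j (insert j J') * ω (I'.erase j) (insert j J')

lemma sgn_singleton {n : ℕ} (i : Fin n) : sgn i ({i} : Finset (Fin n)) = 1 := by
  simp [sgn, Finset.filter_singleton]

lemma sgn_sq {n : ℕ} (i : Fin n) (J : Finset (Fin n)) : sgn i J * sgn i J = 1 := by
  simp [sgn, ← pow_add, ← two_mul, pow_mul]

lemma N_supp {n q : ℕ} (ω : Cov n) (hω : IsBidegree 1 q ω) :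
    ∀ I J : Finset (Fin n), I ≠ ∅ → Nmap 1 ω I J = 0 := by
  intro I J hI
  unfold Nmap
  apply Finset.sum_eq_zero
  intro i hi
  split
  · rfl
  · rename_i hiI
    rw [hω (insert i I) (J.erase i) ?_]
    · ring
    left
    rw [Finset.card_insert_of_notMem hiI]
    have : 0 < I.card := Finset.card_pos.mpr (Finset.nonempty_iff_ne_empty.mpr hI)
    omega

lemma N_supp2 {n q : ℕ} (ω : Cov n) (hω : IsBidegree 1 q ω) :
    ∀ J : Finset (Fin n), J.card ≠ q + 1 → Nmap 1 ω ∅ J = 0 := by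
  intro J hJ
  unfold Nmap
  apply Finset.sum_eq_zero
  intro i hi
  split
  · rfl
  · rw [hω _ (J.erase i) ?_]
    · ring
    right
    rw [Finset.card_erase_of_mem hi]
    have : 0 < J.card := Finset.card_pos.mpr ⟨i, hi⟩
    omega

lemma Nbar_supp {n q : ℕ} (ω : Cov n) (hω : IsBidegree 1 q ω) :
    ∀ I' J' : Finset (Fin n), 2 ≤ I'.card → Nbarmap 0 (Nmap 1 ω) I' J' = 0 := by
  intro I' J' h
  unfold Nbarmap
  apply Finset.sum_eq_zero
  intro j hj
  split
  · rfl
  · rw [N_supp ω hω _ _ ?_]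
    · ring
    have h1 : 1 ≤ (I'.erase j).card := by
      rw [Finset.card_erase_of_mem hj]; omega
    intro he
    rw [he] at h1
    simp at h1

/-- `N ∘ N̄ ∘ N = (q+1) · N` on `Λ¹ V* ⊗ Λ^q V*` (Lemma 3.7, first identity). Here
`N : A^{1,q} → A^{0,q+1}`, `N̄ : A^{0,q+1} → A^{1,q}`. -/
theorem N_Nbar_N (n q : ℕ) (ω : Cov n) (hω : IsBidegree 1 q ω) :
    Nmap 1 (Nbarmap 0 (Nmap 1 ω)) = fun I J => ((q : ℝ) + 1) * Nmap 1 ω I J := by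
  funext I J
  by_cases hI : I = ∅
  · subst hI
    have step : ∀ i ∈ J, (if i ∈ (∅ : Finset (Fin n)) then (0:ℝ) else
        (-1:ℝ)^(1-1) * sgn i (insert i ∅) * sgn i J *
          Nbarmap 0 (Nmap 1 ω) (insert i ∅) (J.erase i)) = Nmap 1 ω ∅ J := by
      intro i hi
      have h1 : insert i (∅ : Finset (Fin n)) = {i} := rfl
      rw [if_neg (Finset.notMem_empty i), h1]
      have h2 : Nbarmap 0 (Nmap 1 ω) {i} (J.erase i) = sgn i J * Nmap 1 ω ∅ J := by
        unfold Nbarmap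
        rw [Finset.sum_singleton, if_neg (Finset.notMem_erase i J),
            Finset.insert_erase hi, Finset.erase_singleton, sgn_singleton]
        ring
      rw [h2, sgn_singleton]
      have hs : sgn i J * sgn i J = 1 := sgn_sq i J
      calc (-1:ℝ)^(1-1) * 1 * sgn i J * (sgn i J * Nmap 1 ω ∅ J)
          = (sgn i J * sgn i J) * Nmap 1 ω ∅ J := by ring
        _ = Nmap 1 ω ∅ J := by rw [hs, one_mul]
    have lhs : Nmap 1 (Nbarmap 0 (Nmap 1 ω)) ∅ J = (J.card : ℝ) * Nmap 1 ω ∅ J := by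
      show (∑ i ∈ J, if i ∈ (∅ : Finset (Fin n)) then (0:ℝ) else
        (-1:ℝ)^(1-1) * sgn i (insert i ∅) * sgn i J *
          Nbarmap 0 (Nmap 1 ω) (insert i ∅) (J.erase i)) = _
      rw [Finset.sum_congr rfl step, Finset.sum_const, nsmul_eq_mul]
    by_cases hJ : J.card = q + 1
    · rw [lhs, hJ]
      push_cast
      ring
    · rw [lhs, N_supp2 ω hω J hJ]
      ring
  · have hRHS : Nmap 1 ω I J = 0 := N_supp ω hω I J hI
    show Nmap 1 (Nbarmap 0 (Nmap 1 ω)) I J = ((q : ℝ) + 1) * Nmap 1 ω I J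
    rw [hRHS, mul_zero]
    show (∑ i ∈ J, if i ∈ I then (0:ℝ) else
      (-1:ℝ)^(1-1) * sgn i (insert i I) * sgn i J *
        Nbarmap 0 (Nmap 1 ω) (insert i I) (J.erase i)) = 0
    apply Finset.sum_eq_zero
    intro i hi
    split
    · rfl
    · rename_i hiI
      rw [Nbar_supp ω hω _ _ ?_, mul_zero]
      rw [Finset.card_insert_of_notMem hiI]
      have : 1 ≤ I.card := Finset.card_pos.mpr (Finset.nonempty_iff_ne_empty.mpr hI)
      omega
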